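/- arXiv:0712.3237 — 5 statements merged into one kernel-verified Lean document; each statement's English description precedes it below -/
import Mathlib

section
/- Let λ > δ > 0 and x₀ > 0. Let x, τ, H, G : ℝ → ℝ be functions with x and τ differentiable, and suppose that at every time t at which x(t) < x₀ the following hold: x(t) > 0, H(t) ≥ 0, x′(t) = 2τ(t)x(t)², τ′(t) = −2x(t)H(t) + x(t)²G(t), λ − δ ≤ τ(t)² + H(t) ≤ λ + δ, and x(t)|G(t)| ≤ τ(t)² + H(t). Assume x(0) < x₀. Then: (a) if τ(0) ≤ 0, then τ(t) ≤ 0 for all t ≥ 0, x is nonincreasing on [0,∞), and x(t) → 0 as t → +∞; (b) if τ(0) ≥ 0, then x(t) → 0 as t → −∞. -/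
/-!
With `E = τ² + H ≥ λ - δ =: κ`, the bound `x |G| ≤ E` turns the equation for `τ` into
`τ' ≤ x (2τ² - κ)`, so `τ' < 0` wherever `τ² < κ / 2`. Hence `τ ≤ 0` is preserved forward in
time; then `x' = 2τx² ≤ 0`, so `x` stays below `x₀` and the hypotheses keep holding. If `x`
stayed above some `ε > 0`, `τ` would drop below `-√κ / 2` at rate at least `εκ / 2` and stay
there, forcing `x' ≤ -√κ ε²`, which is impossible for a positive `x`. Backward in time, the
same argument applies to `t ↦ (x (-t), -τ (-t))`, which satisfies the same inequalities.
-/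

open Filter Topology Set

def BoundaryFlowIneq (κ x₀ : ℝ) (x τ : ℝ → ℝ) : Prop :=
  ∀ t, x t < x₀ →
    0 < x t ∧ deriv x t = 2 * τ t * x t ^ 2 ∧ deriv τ t ≤ x t * (2 * τ t ^ 2 - κ)

lemma tendsto_atBot_of_deriv_le_neg {f : ℝ → ℝ} (hf : Differentiable ℝ f) {a k : ℝ}
    (hk : 0 < k) (hderiv : ∀ t, a ≤ t → deriv f t ≤ -k) : Tendsto f atTop atBot := by
  have hlin : ∀ t, a ≤ t → f t ≤ f a + -k * (t - a) := fun t ht => by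
    have := (convex_Ici a).image_sub_le_mul_sub_of_deriv_le hf.continuous.continuousOn
      hf.differentiableOn (fun u hu => hderiv u (interior_subset hu)) a (mem_Ici.2 le_rfl) t ht ht
    linarith
  refine tendsto_atBot_mono' atTop ((eventually_ge_atTop a).mono hlin) ?_
  exact tendsto_atBot_add_const_left _ _
    ((tendsto_atTop_add_const_right _ _ tendsto_id).const_mul_atTop_of_neg (neg_lt_zero.2 hk))

lemma boundaryFlowIneq_of_hamiltonian {lam δ x₀ : ℝ} {x τ H G : ℝ → ℝ}
    (hyp : ∀ t : ℝ, x t < x₀ →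
      0 < x t ∧ 0 ≤ H t ∧
      deriv x t = 2 * τ t * (x t) ^ 2 ∧
      deriv τ t = -2 * x t * H t + (x t) ^ 2 * G t ∧
      lam - δ ≤ (τ t) ^ 2 + H t ∧ (τ t) ^ 2 + H t ≤ lam + δ ∧
      x t * |G t| ≤ (τ t) ^ 2 + H t) :
    BoundaryFlowIneq (lam - δ) x₀ x τ := by
  intro t ht
  obtain ⟨hx, -, hdx, hdτ, hE, -, hG⟩ := hyp t ht
  refine ⟨hx, hdx, ?_⟩
  -- `-2xH + x²G ≤ -2xH + x (τ² + H) = x (2τ² - (τ² + H))`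
  have hxG : x t ^ 2 * G t ≤ x t * (τ t ^ 2 + H t) :=
    calc x t ^ 2 * G t ≤ x t * (x t * |G t|) := by nlinarith [le_abs_self (G t)]
      _ ≤ x t * (τ t ^ 2 + H t) := mul_le_mul_of_nonneg_left hG hx.le
  rw [hdτ]
  nlinarith [mul_le_mul_of_nonneg_left hE hx.le]

namespace BoundaryFlowIneq

variable {κ x₀ : ℝ} {x τ : ℝ → ℝ}

lemma comp_neg (h : BoundaryFlowIneq κ x₀ x τ) :
    BoundaryFlowIneq κ x₀ (fun t => x (-t)) (fun t => -τ (-t)) := by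
  intro t ht
  obtain ⟨hx, hdx, hdτ⟩ := h (-t) ht
  refine ⟨hx, ?_, ?_⟩
  · rw [deriv_comp_neg, hdx]
    ring
  · rw [deriv.fun_neg, deriv_comp_neg, neg_neg, neg_sq]
    exact hdτ

lemma tau_le_neg_on_Icc (h : BoundaryFlowIneq κ x₀ x τ) (hτd : Differentiable ℝ τ)
    {c a b : ℝ} (hc : 2 * c ^ 2 < κ) (hx : ∀ t ∈ Icc a b, x t < x₀) (ha : τ a ≤ -c) :
    ∀ t ∈ Icc a b, τ t ≤ -c :=
  image_le_of_deriv_right_lt_deriv_boundary hτd.continuous.continuousOn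
    (fun t _ => (hτd t).hasDerivAt.hasDerivWithinAt) ha (fun _ => hasDerivAt_const _ _)
    fun t ht hτt => by
      obtain ⟨hxt, -, hdτ⟩ := h t (hx t (Ico_subset_Icc_self ht))
      rw [hτt, neg_sq] at hdτ
      nlinarith

lemma antitoneOn (h : BoundaryFlowIneq κ x₀ x τ) (hxd : Differentiable ℝ x) {s : Set ℝ}
    (hs : Convex ℝ s) (hsx : ∀ t ∈ s, x t < x₀ ∧ τ t ≤ 0) : AntitoneOn x s :=
  antitoneOn_of_deriv_nonpos hs hxd.continuous.continuousOn hxd.differentiableOn fun t ht => by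
    obtain ⟨hxt, hτt⟩ := hsx t (interior_subset ht)
    rw [(h t hxt).2.1]
    exact mul_nonpos_of_nonpos_of_nonneg (by linarith) (sq_nonneg _)

lemma forward_invariant (h : BoundaryFlowIneq κ x₀ x τ) (hκ : 0 < κ)
    (hxd : Differentiable ℝ x) (hτd : Differentiable ℝ τ) {a : ℝ} (hxa : x a < x₀)
    (hτa : τ a ≤ 0) : ∀ t, a ≤ t → x t ≤ x a ∧ τ t ≤ 0 := by
  intro b hab
  set s := {t | x t ≤ x a ∧ τ t ≤ 0}
  have hs : IsClosed s := (isClosed_le hxd.continuous continuous_const).inter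
    (isClosed_le hτd.continuous continuous_const)
  have hstep : ∀ t ∈ s ∩ Ico a b, s ∈ 𝓝[>] t := by
    rintro t ⟨⟨hxt, hτt⟩, -⟩
    obtain ⟨u, htu, hu⟩ := mem_nhdsGE_iff_exists_Icc_subset.1 <| nhdsWithin_le_nhds <|
      hxd.continuous.continuousAt.preimage_mem_nhds (Iio_mem_nhds (hxt.trans_lt hxa))
    have hτu : ∀ v ∈ Icc t u, τ v ≤ 0 := by
      simpa using h.tau_le_neg_on_Icc hτd (c := 0) (by simpa) hu (by simpa)
    have hanti := h.antitoneOn hxd (convex_Icc t u) fun v hv => ⟨hu hv, hτu v hv⟩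
    filter_upwards [Icc_mem_nhdsGT htu] with v hv
    exact ⟨(hanti (left_mem_Icc.2 htu.le) hv hv.1).trans hxt, hτu v hv⟩
  exact (hs.inter isClosed_Icc).Icc_subset_of_forall_mem_nhdsWithin ⟨le_rfl, hτa⟩ hstep
    ⟨hab, le_rfl⟩

lemma exists_lt_of_tau_nonpos (h : BoundaryFlowIneq κ x₀ x τ) (hκ : 0 < κ)
    (hxd : Differentiable ℝ x) (hτd : Differentiable ℝ τ) (hx : ∀ t, 0 ≤ t → x t < x₀)
    (hτ : ∀ t, 0 ≤ t → τ t ≤ 0) {ε : ℝ} (hε : 0 < ε) : ∃ t, 0 ≤ t ∧ x t < ε := by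
  by_contra! hlarge
  -- `2τ² - κ ≤ -κ / 2` as long as `-c < τ ≤ 0`, while `2c² < κ` keeps `τ ≤ -c` invariant
  obtain ⟨c, hc, hc2⟩ : ∃ c : ℝ, 0 < c ∧ c ^ 2 = κ / 4 :=
    ⟨√(κ / 4), by positivity, Real.sq_sqrt (by positivity)⟩
  obtain ⟨t₁, ht₁, hτt₁⟩ : ∃ t₁, 0 ≤ t₁ ∧ τ t₁ ≤ -c := by
    by_contra! hτc
    have hdτ : ∀ t, 0 ≤ t → deriv τ t ≤ -(ε * (κ / 2)) := fun t ht => by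
      obtain ⟨-, -, hdτ⟩ := h t (hx t ht)
      have : 2 * τ t ^ 2 - κ ≤ -(κ / 2) := by nlinarith [hτc t ht, hτ t ht]
      nlinarith [hlarge t ht]
    obtain ⟨t, hτt, ht⟩ := (((tendsto_atBot_of_deriv_le_neg hτd (by positivity) hdτ).eventually
      (eventually_lt_atBot (-c))).and (eventually_ge_atTop 0)).exists
    exact (hτc t ht).not_gt hτt
  have hdx : ∀ t, t₁ ≤ t → deriv x t ≤ -(2 * c * ε ^ 2) := fun t ht => by
    have ht0 := ht₁.trans ht
    obtain ⟨-, hdx, -⟩ := h t (hx t ht0)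
    have hτt := h.tau_le_neg_on_Icc hτd (by nlinarith) (fun v hv => hx v (ht₁.trans hv.1))
      hτt₁ t ⟨ht, le_rfl⟩
    have hx2 : ε ^ 2 ≤ x t ^ 2 := pow_le_pow_left₀ hε.le (hlarge t ht0) 2
    rw [hdx]
    nlinarith [mul_nonpos_of_nonpos_of_nonneg (by linarith : τ t + c ≤ 0) (sq_nonneg (x t))]
  obtain ⟨t, hxt, ht⟩ := (((tendsto_atBot_of_deriv_le_neg hxd (by positivity) hdx).eventually
    (eventually_lt_atBot ε)).and (eventually_ge_atTop t₁)).exists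
  exact (hlarge t (ht₁.trans ht)).not_gt hxt

theorem nontrapping_forward (h : BoundaryFlowIneq κ x₀ x τ) (hκ : 0 < κ)
    (hxd : Differentiable ℝ x) (hτd : Differentiable ℝ τ) (hx0 : x 0 < x₀) (hτ0 : τ 0 ≤ 0) :
    (∀ t, 0 ≤ t → τ t ≤ 0) ∧ AntitoneOn x (Ici 0) ∧ Tendsto x atTop (𝓝 0) := by
  have hinv := h.forward_invariant hκ hxd hτd hx0 hτ0
  have hx : ∀ t, 0 ≤ t → x t < x₀ := fun t ht => (hinv t ht).1.trans_lt hx0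
  have hanti : AntitoneOn x (Ici 0) :=
    h.antitoneOn hxd (convex_Ici 0) fun t ht => ⟨hx t ht, (hinv t ht).2⟩
  refine ⟨fun t ht => (hinv t ht).2, hanti, tendsto_order.2 ⟨fun l hl => ?_, fun u hu => ?_⟩⟩
  · filter_upwards [eventually_ge_atTop 0] with t ht
    exact hl.trans (h t (hx t ht)).1
  · obtain ⟨t₀, ht₀, hxt₀⟩ :=
      h.exists_lt_of_tau_nonpos hκ hxd hτd hx (fun t ht => (hinv t ht).2) hu
    filter_upwards [eventually_ge_atTop t₀] with t ht
    exact (hanti ht₀ (ht₀.trans ht) ht).trans_lt hxt₀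

end BoundaryFlowIneq

theorem stmt0_general (lam δ x₀ : ℝ) (hδlam : δ < lam)
    (x τ H G : ℝ → ℝ) (hxd : Differentiable ℝ x) (hτd : Differentiable ℝ τ)
    (hyp : ∀ t : ℝ, x t < x₀ →
      0 < x t ∧ 0 ≤ H t ∧
      deriv x t = 2 * τ t * (x t) ^ 2 ∧
      deriv τ t = -2 * x t * H t + (x t) ^ 2 * G t ∧
      lam - δ ≤ (τ t) ^ 2 + H t ∧ (τ t) ^ 2 + H t ≤ lam + δ ∧
      x t * |G t| ≤ (τ t) ^ 2 + H t)
    (hx0 : x 0 < x₀) :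
    (τ 0 ≤ 0 →
      (∀ t : ℝ, 0 ≤ t → τ t ≤ 0) ∧ AntitoneOn x (Set.Ici 0) ∧
        Tendsto x atTop (𝓝 0)) ∧
    (0 ≤ τ 0 → Tendsto x atBot (𝓝 0)) := by
  have hflow := boundaryFlowIneq_of_hamiltonian hyp
  have hκ : 0 < lam - δ := sub_pos.2 hδlam
  refine ⟨hflow.nontrapping_forward hκ hxd hτd hx0, fun hτ0 => ?_⟩
  have hback := hflow.comp_neg.nontrapping_forward hκ (hxd.comp differentiable_neg)
    (hτd.comp differentiable_neg).neg (by simpa) (by simpa)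
  simpa [Function.comp_def] using hback.2.2.comp tendsto_neg_atBot_atTop

/-- Coordinate form of Lemma 2.1 (nontrapping near the boundary of a scattering
manifold): along the Hamiltonian flow in scattering coordinates, if `x 0 < x₀`
then `x → 0` forward in time when `τ 0 ≤ 0`, and backward in time when `τ 0 ≥ 0`. -/
theorem stmt0 (lam δ x₀ : ℝ) (hδ : 0 < δ) (hδlam : δ < lam) (hx₀ : 0 < x₀)
    (x τ H G : ℝ → ℝ) (hxd : Differentiable ℝ x) (hτd : Differentiable ℝ τ)
    (hyp : ∀ t : ℝ, x t < x₀ →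
      0 < x t ∧ 0 ≤ H t ∧
      deriv x t = 2 * τ t * (x t) ^ 2 ∧
      deriv τ t = -2 * x t * H t + (x t) ^ 2 * G t ∧
      lam - δ ≤ (τ t) ^ 2 + H t ∧ (τ t) ^ 2 + H t ≤ lam + δ ∧
      x t * |G t| ≤ (τ t) ^ 2 + H t)
    (hx0 : x 0 < x₀) :
    (τ 0 ≤ 0 →
      (∀ t : ℝ, 0 ≤ t → τ t ≤ 0) ∧ AntitoneOn x (Set.Ici 0) ∧
        Tendsto x atTop (𝓝 0)) ∧
    (0 ≤ τ 0 → Tendsto x atBot (𝓝 0)) :=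
  stmt0_general lam δ x₀ hδlam x τ H G hxd hτd hyp hx0
end

section
/- Let λ > δ > 0. Let x, τ, H, G : ℝ → ℝ with x and τ differentiable, and suppose for all t ≥ 0: x(t) > 0, H(t) ≥ 0, x′(t) = 2τ(t)x(t)², τ′(t) = −2x(t)H(t) + x(t)²G(t), τ(t)² + H(t) ≥ λ − δ, and x(t)|G(t)| ≤ τ(t)² + H(t). Then for all t ≥ 0, τ(t)/x(t) ≤ τ(0)/x(0) − (λ − δ)t; in particular τ(t)/x(t) → −∞ as t → ∞. -/
/-!
Along the flow, `(τ/x)' = -2τ² - 2H + xG`, and the bound `x|G| ≤ τ² + H` lets the term `xG`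
absorb only half of `-2(τ² + H)`. Hence `(τ/x)' ≤ -(τ² + H) ≤ -(λ - δ)`, and the mean value
inequality integrates this to the linear decay of `τ/x`.
-/

open Filter Topology Set

theorem hasDerivAt_div_of_flow {x τ : ℝ → ℝ} {H G t : ℝ}
    (hx : HasDerivAt x (2 * τ t * x t ^ 2) t) (hτ : HasDerivAt τ (-2 * x t * H + x t ^ 2 * G) t)
    (hxt : x t ≠ 0) :
    HasDerivAt (fun s => τ s / x s) (-2 * τ t ^ 2 - 2 * H + x t * G) t :=
  (hτ.fun_div hx hxt).congr_deriv (by field_simp; ring)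

theorem flow_deriv_le_neg_energy {x τ H G : ℝ} (hx : 0 < x) (hG : x * |G| ≤ τ ^ 2 + H) :
    -2 * τ ^ 2 - 2 * H + x * G ≤ -(τ ^ 2 + H) := by
  nlinarith [le_abs_self G]

theorem le_sub_mul_of_deriv_le_neg {f : ℝ → ℝ} {c : ℝ}
    (hf : ∀ t, 0 ≤ t → DifferentiableAt ℝ f t) (hf' : ∀ t, 0 < t → deriv f t ≤ -c)
    {t : ℝ} (ht : 0 ≤ t) : f t ≤ f 0 - c * t := by
  have hdiff : DifferentiableOn ℝ f (Ici 0) := fun s hs => (hf s hs).differentiableWithinAt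
  have := (convex_Ici (0 : ℝ)).image_sub_le_mul_sub_of_deriv_le hdiff.continuousOn
    (hdiff.mono interior_subset) (fun s hs => hf' s (by rwa [interior_Ici] at hs))
    0 self_mem_Ici t ht ht
  linarith

theorem tendsto_atBot_of_le_sub_mul {f : ℝ → ℝ} {a c : ℝ} (hc : 0 < c)
    (hf : ∀ t, 0 ≤ t → f t ≤ a - c * t) : Tendsto f atTop atBot := by
  refine tendsto_atBot_mono' atTop ((eventually_ge_atTop 0).mono hf) ?_
  exact tendsto_atBot_add_const_left atTop a
    (tendsto_neg_atTop_atBot.comp (tendsto_id.const_mul_atTop hc))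

theorem stmt2_general (lam δ : ℝ) (hδlam : δ < lam)
    (x τ H G : ℝ → ℝ) (hxd : Differentiable ℝ x) (hτd : Differentiable ℝ τ)
    (hyp : ∀ t : ℝ, 0 ≤ t →
      0 < x t ∧ 0 ≤ H t ∧
      deriv x t = 2 * τ t * (x t) ^ 2 ∧
      deriv τ t = -2 * x t * H t + (x t) ^ 2 * G t ∧
      lam - δ ≤ (τ t) ^ 2 + H t ∧
      x t * |G t| ≤ (τ t) ^ 2 + H t) :
    (∀ t : ℝ, 0 ≤ t → τ t / x t ≤ τ 0 / x 0 - (lam - δ) * t) ∧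
    Tendsto (fun t => τ t / x t) atTop atBot := by
  have hderiv : ∀ t, 0 ≤ t →
      HasDerivAt (fun s => τ s / x s) (-2 * τ t ^ 2 - 2 * H t + x t * G t) t := by
    intro t ht
    obtain ⟨hx, -, hdx, hdτ, -⟩ := hyp t ht
    exact hasDerivAt_div_of_flow (hdx ▸ (hxd t).hasDerivAt) (hdτ ▸ (hτd t).hasDerivAt) hx.ne'
  have hdecay : ∀ t, 0 ≤ t → τ t / x t ≤ τ 0 / x 0 - (lam - δ) * t := by
    refine fun t => le_sub_mul_of_deriv_le_neg (fun s hs => (hderiv s hs).differentiableAt) ?_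
    intro s hs
    obtain ⟨hx, -, -, -, hE, hG⟩ := hyp s hs.le
    rw [(hderiv s hs.le).deriv]
    linarith [flow_deriv_le_neg_energy hx hG]
  exact ⟨hdecay, tendsto_atBot_of_le_sub_mul (sub_pos.mpr hδlam) hdecay⟩

/-- The key monotonicity estimate in the proof of Lemma 2.1: `τ/x` decreases at
rate at least `λ - δ`, hence tends to `-∞`. -/
theorem stmt2 (lam δ : ℝ) (hδ : 0 < δ) (hδlam : δ < lam)
    (x τ H G : ℝ → ℝ) (hxd : Differentiable ℝ x) (hτd : Differentiable ℝ τ)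
    (hyp : ∀ t : ℝ, 0 ≤ t →
      0 < x t ∧ 0 ≤ H t ∧
      deriv x t = 2 * τ t * (x t) ^ 2 ∧
      deriv τ t = -2 * x t * H t + (x t) ^ 2 * G t ∧
      lam - δ ≤ (τ t) ^ 2 + H t ∧
      x t * |G t| ≤ (τ t) ^ 2 + H t) :
    (∀ t : ℝ, 0 ≤ t → τ t / x t ≤ τ 0 / x 0 - (lam - δ) * t) ∧
    Tendsto (fun t => τ t / x t) atTop atBot :=
  stmt2_general lam δ hδlam x τ H G hxd hτd hyp
end

section
/- Let c₁ > 0 and M > 0. Let x, τ : (−∞, 0] → ℝ be differentiable with x(t) > 0, x′(t) = 2τ(t)x(t)², τ′(t) ≤ −c₁x(t), and τ(t) ≤ M for all t ≤ 0. Then for every t ≤ 0, τ(t) ≥ τ(0) + c₁ (log x(0) − log x(t)) / (2M). -/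
/-!
`τ + c₁/(2M) · log x` is nonincreasing: its derivative is `τ' + (c₁/M) τ x ≤ -c₁x + c₁x = 0`,
using `(log x)' = 2τx` and `τ ≤ M`. Comparing its values at `t` and `0` gives the bound.
-/

open Set Real

theorem antitoneOn_add_const_mul_log {D : Set ℝ} (hD : Convex ℝ D) {x τ : ℝ → ℝ} (k : ℝ)
    (hxd : DifferentiableOn ℝ x D) (hτd : DifferentiableOn ℝ τ D) (hxpos : ∀ t ∈ D, 0 < x t)
    (hderiv : ∀ t ∈ D, derivWithin τ D t + k * (derivWithin x D t / x t) ≤ 0) :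
    AntitoneOn (fun t => τ t + k * log (x t)) D := by
  have hlog : DifferentiableOn ℝ (fun t => log (x t)) D :=
    hxd.log fun t ht => (hxpos t ht).ne'
  refine antitoneOn_of_hasDerivWithinAt_nonpos hD (hτd.add (hlog.const_mul k)).continuousOn
    (fun t ht => ?_) (fun t ht => hderiv t (interior_subset ht))
  have htD := interior_subset ht
  exact ((hτd t htD).hasDerivWithinAt.add
    (((hxd t htD).hasDerivWithinAt.log (hxpos t htD).ne').const_mul k)).mono interior_subset

/-- Quantitative lower bound for `τ` from Step 2 of the proof of Lemma 3.1:
integrating `ẋ = 2τx²`, `τ̇ ≤ -c₁x` and `τ ≤ M` backwards in time gives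
`τ(t) ≥ τ(0) + c₁(log x(0) - log x(t))/(2M)`. -/
theorem stmt5 (c₁ M : ℝ) (hc₁ : 0 < c₁) (hM : 0 < M) (x τ : ℝ → ℝ)
    (hxd : DifferentiableOn ℝ x (Set.Iic 0)) (hτd : DifferentiableOn ℝ τ (Set.Iic 0))
    (hxpos : ∀ t : ℝ, t ≤ 0 → 0 < x t)
    (hx' : ∀ t : ℝ, t ≤ 0 → derivWithin x (Set.Iic 0) t = 2 * τ t * (x t) ^ 2)
    (hτ' : ∀ t : ℝ, t ≤ 0 → derivWithin τ (Set.Iic 0) t ≤ -c₁ * x t)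
    (hτM : ∀ t : ℝ, t ≤ 0 → τ t ≤ M) :
    ∀ t : ℝ, t ≤ 0 →
      τ 0 + c₁ * (Real.log (x 0) - Real.log (x t)) / (2 * M) ≤ τ t := by
  have hrate : ∀ t ∈ Iic (0 : ℝ),
      derivWithin τ (Iic 0) t + c₁ / (2 * M) * (derivWithin x (Iic 0) t / x t) ≤ 0 := by
    intro t ht
    have hxt := hxpos t ht
    have hlog_rate : derivWithin x (Iic 0) t / x t = 2 * τ t * x t := by
      rw [hx' t ht]; field_simp
    have hτx : c₁ / (2 * M) * (2 * τ t * x t) ≤ c₁ * x t := by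
      rw [div_mul_eq_mul_div, div_le_iff₀ (by positivity)]
      nlinarith [mul_le_mul_of_nonneg_left (hτM t ht) (mul_pos hc₁ hxt).le]
    rw [hlog_rate]
    linarith [hτ' t ht]
  have hmono := antitoneOn_add_const_mul_log (convex_Iic 0) (c₁ / (2 * M)) hxd hτd
    hxpos hrate
  intro t ht
  have h := hmono (mem_Iic.2 ht) (mem_Iic.2 le_rfl) ht
  have hsplit : c₁ * (log (x 0) - log (x t)) / (2 * M)
      = c₁ / (2 * M) * log (x 0) - c₁ / (2 * M) * log (x t) := by ring
  simp only at h
  linarith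
end

section
/- Let c₁ > 0 and M > 0. Let x, τ : (−∞, 0] → ℝ be differentiable with x(t) > 0, x′(t) = 2τ(t)x(t)², τ′(t) ≤ −c₁x(t), and τ(t) ≤ M for all t ≤ 0. Then x admits the uniform lower bound x(t) ≥ x(0)·exp(−2M(M − τ(0))/c₁) for all t ≤ 0; in particular x(t) does not tend to 0 as t → −∞. -/
open Filter Topology

/-!
Along the flow, `log x + (2M/c₁) τ` is nonincreasing: its derivative is
`2τx + (2M/c₁) τ̇ ≤ 2Mx - 2Mx = 0`. Going backwards from `0` to `t` it can only grow, and since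
`τ(t) ≤ M` the growth must be carried by `log x(t)`, which therefore stays above
`log x(0) - (2M/c₁)(M - τ(0))`.
-/

section RiccatiFlow

variable {s : Set ℝ} {x τ : ℝ → ℝ} {c M : ℝ}

lemma antitoneOn_log_add_mul_of_riccati (hs : Convex ℝ s) (hc : 0 < c) (hM : 0 ≤ M)
    (hxd : DifferentiableOn ℝ x s) (hτd : DifferentiableOn ℝ τ s)
    (hxpos : ∀ t ∈ s, 0 < x t)
    (hx' : ∀ t ∈ s, derivWithin x s t = 2 * τ t * x t ^ 2)
    (hτ' : ∀ t ∈ s, derivWithin τ s t ≤ -c * x t)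
    (hτM : ∀ t ∈ s, τ t ≤ M) :
    AntitoneOn (fun t => Real.log (x t) + 2 * M / c * τ t) s := by
  have hderiv : ∀ t ∈ s, HasDerivWithinAt (fun t => Real.log (x t) + 2 * M / c * τ t)
      (2 * τ t * x t + 2 * M / c * derivWithin τ s t) s t := by
    intro t ht
    have hlog := (hxd t ht).hasDerivWithinAt.log (hxpos t ht).ne'
    rw [hx' t ht, show 2 * τ t * x t ^ 2 / x t = 2 * τ t * x t by field_simp] at hlog
    exact hlog.add ((hτd t ht).hasDerivWithinAt.const_mul _)
  refine antitoneOn_of_hasDerivWithinAt_nonpos hs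
    (fun t ht => (hderiv t ht).continuousWithinAt)
    (fun t ht => (hderiv t (interior_subset ht)).mono interior_subset) fun t ht => ?_
  replace ht := interior_subset ht
  have hxt := hxpos t ht
  have hτ_growth : 2 * τ t * x t ≤ 2 * M * x t := by nlinarith [hτM t ht]
  have hτ_decay : 2 * M / c * derivWithin τ s t ≤ -(2 * M * x t) :=
    calc 2 * M / c * derivWithin τ s t ≤ 2 * M / c * (-c * x t) :=
          mul_le_mul_of_nonneg_left (hτ' t ht) (by positivity)
      _ = -(2 * M * x t) := by field_simp
  linarith

lemma le_of_antitoneOn_log_add_mul (hc : 0 < c) (hM : 0 ≤ M)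
    (hanti : AntitoneOn (fun t => Real.log (x t) + 2 * M / c * τ t) s)
    (hxpos : ∀ t ∈ s, 0 < x t) (hτM : ∀ t ∈ s, τ t ≤ M)
    {t₀ t : ℝ} (ht₀ : t₀ ∈ s) (ht : t ∈ s) (hle : t ≤ t₀) :
    x t₀ * Real.exp (-2 * M * (M - τ t₀) / c) ≤ x t := by
  have hlyap := hanti ht ht₀ hle
  have hτt : 2 * M / c * τ t ≤ 2 * M / c * M :=
    mul_le_mul_of_nonneg_left (hτM t ht) (by positivity)
  have hlog : Real.log (x t₀) + -2 * M * (M - τ t₀) / c ≤ Real.log (x t) := by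
    have : -2 * M * (M - τ t₀) / c = 2 * M / c * τ t₀ - 2 * M / c * M := by ring
    simp only at hlyap
    linarith
  calc x t₀ * Real.exp (-2 * M * (M - τ t₀) / c)
      = Real.exp (Real.log (x t₀) + -2 * M * (M - τ t₀) / c) := by
        rw [Real.exp_add, Real.exp_log (hxpos t₀ ht₀)]
    _ ≤ Real.exp (Real.log (x t)) := Real.exp_le_exp.mpr hlog
    _ = x t := Real.exp_log (hxpos t ht)

end RiccatiFlow

lemma not_tendsto_zero_of_forall_Iic_le {x : ℝ → ℝ} {a b : ℝ} (hb : 0 < b)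
    (hx : ∀ t ≤ a, b ≤ x t) : ¬ Tendsto x atBot (𝓝 0) := fun htend =>
  hb.not_ge (ge_of_tendsto htend ((eventually_le_atBot a).mono hx))

/-- The contradiction step in Step 2 of the proof of Lemma 3.1: under
`ẋ = 2τx²`, `τ̇ ≤ -c₁x` and `τ ≤ M` on `(-∞,0]`, the function `x` admits a
uniform positive lower bound, so it cannot tend to `0` as `t → -∞`. -/
theorem stmt6 (c₁ M : ℝ) (hc₁ : 0 < c₁) (hM : 0 < M) (x τ : ℝ → ℝ)
    (hxd : DifferentiableOn ℝ x (Set.Iic 0)) (hτd : DifferentiableOn ℝ τ (Set.Iic 0))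
    (hxpos : ∀ t : ℝ, t ≤ 0 → 0 < x t)
    (hx' : ∀ t : ℝ, t ≤ 0 → derivWithin x (Set.Iic 0) t = 2 * τ t * (x t) ^ 2)
    (hτ' : ∀ t : ℝ, t ≤ 0 → derivWithin τ (Set.Iic 0) t ≤ -c₁ * x t)
    (hτM : ∀ t : ℝ, t ≤ 0 → τ t ≤ M) :
    (∀ t : ℝ, t ≤ 0 → x 0 * Real.exp (-2 * M * (M - τ 0) / c₁) ≤ x t) ∧
    ¬ Tendsto x atBot (𝓝 0) := by
  have hanti := antitoneOn_log_add_mul_of_riccati (convex_Iic 0) hc₁ hM.le hxd hτd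
    hxpos hx' hτ' hτM
  have hbound : ∀ t : ℝ, t ≤ 0 → x 0 * Real.exp (-2 * M * (M - τ 0) / c₁) ≤ x t :=
    fun t ht => le_of_antitoneOn_log_add_mul hc₁ hM.le hanti hxpos hτM (Set.mem_Iic.2 le_rfl) ht ht
  have hx₀ := hxpos 0 le_rfl
  exact ⟨hbound, not_tendsto_zero_of_forall_Iic_le (by positivity) hbound⟩
end

section
/- Let λ > 0, c₁ > 0, and M ≥ √λ. Let x, τ : (−∞, 0] → ℝ be differentiable and suppose: x(t) > 0 and |τ(t)| ≤ M for all t ≤ 0; x′(t) = 2τ(t)x(t)² for all t ≤ 0; τ′(t) ≤ −c₁x(t) at every t ≤ 0 at which τ(t) ≤ 2√λ/3; and x(t) → 0 as t → −∞. Then there exists T > 0 such that τ(t) > 2√λ/3 for all t ≤ −T. -/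
/-!
If `τ ≤ 2√λ/3` at arbitrarily negative times, then, since `τ` strictly decreases whenever it
sits at the level `2√λ/3`, it stays below that level on all of `(-∞, 0]`. There `τ' ≤ -c₁ x`,
so with `k = 2M/c₁` the function `x e^{kτ}` has derivative
`e^{kτ} (2τx² + kτ'x) ≤ e^{kτ} (2Mx² - 2Mx²) = 0`. Hence `x e^{kτ}` is nonincreasing, and since
`|τ| ≤ M` this bounds `x` below on `(-∞, 0]` by a positive constant, contradicting `x → 0`.
-/

open Filter Topology Set

theorem le_of_derivWithin_neg_of_eq {f : ℝ → ℝ} {s : Set ℝ} {a b c : ℝ} (hab : a ≤ b)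
    (hs : Icc a b ⊆ s) (hf : DifferentiableOn ℝ f s)
    (hneg : ∀ t ∈ Ico a b, f t = c → derivWithin f s t < 0) (ha : f a ≤ c) : f b ≤ c := by
  have hderiv : ∀ t ∈ Ico a b, HasDerivWithinAt f (derivWithin f s t) (Ici t) t := fun t ht =>
    ((hf t (hs (Ico_subset_Icc_self ht))).hasDerivWithinAt.mono
        ((Icc_subset_Icc_left ht.1).trans hs)).mono_of_mem_nhdsWithin (Icc_mem_nhdsGE ht.2)
  exact image_le_of_deriv_right_lt_deriv_boundary (hf.continuousOn.mono hs) hderiv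
    (B := fun _ => c) ha (fun _ => hasDerivAt_const _ _) hneg ⟨hab, le_rfl⟩

theorem antitoneOn_mul_exp_of_hasDerivWithinAt {s : Set ℝ} (hs : Convex ℝ s) {f g f' g' : ℝ → ℝ}
    {k : ℝ} (hf : ∀ t ∈ s, HasDerivWithinAt f (f' t) s t)
    (hg : ∀ t ∈ s, HasDerivWithinAt g (g' t) s t)
    (hle : ∀ t ∈ interior s, f' t + k * g' t * f t ≤ 0) :
    AntitoneOn (fun t => f t * Real.exp (k * g t)) s := by
  have hderiv : ∀ t ∈ s, HasDerivWithinAt (fun t => f t * Real.exp (k * g t))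
      (Real.exp (k * g t) * (f' t + k * g' t * f t)) s t := fun t ht =>
    ((hf t ht).fun_mul ((hg t ht).const_mul k).exp).congr_deriv (by ring)
  refine antitoneOn_of_hasDerivWithinAt_nonpos hs (fun t ht => (hderiv t ht).continuousWithinAt)
    (fun t ht => (hderiv t (interior_subset ht)).mono interior_subset) fun t ht => ?_
  exact mul_nonpos_of_nonneg_of_nonpos (Real.exp_pos _).le (hle t ht)

theorem exists_pos_le_of_derivWithin_le_neg_mul {x τ : ℝ → ℝ} {c₁ M : ℝ} (hc₁ : 0 < c₁)
    (hxd : DifferentiableOn ℝ x (Iic 0)) (hτd : DifferentiableOn ℝ τ (Iic 0))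
    (hxpos : ∀ t ≤ 0, 0 < x t) (hτM : ∀ t ≤ 0, |τ t| ≤ M)
    (hx' : ∀ t ≤ 0, derivWithin x (Iic 0) t = 2 * τ t * x t ^ 2)
    (hτ' : ∀ t ≤ 0, derivWithin τ (Iic 0) t ≤ -c₁ * x t) :
    ∃ δ > 0, ∀ t ≤ 0, δ ≤ x t := by
  set k := 2 * M / c₁
  have hk : 0 ≤ k := div_nonneg (by linarith [(abs_nonneg _).trans (hτM 0 le_rfl)]) hc₁.le
  have hkc₁ : k * c₁ = 2 * M := div_mul_cancel₀ _ hc₁.ne'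
  clear_value k
  have hanti : AntitoneOn (fun t => x t * Real.exp (k * τ t)) (Iic 0) := by
    refine antitoneOn_mul_exp_of_hasDerivWithinAt (convex_Iic 0)
      (fun t ht => (hxd t ht).hasDerivWithinAt) (fun t ht => (hτd t ht).hasDerivWithinAt)
      fun t ht => ?_
    rw [interior_Iic] at ht
    have hxt := hxpos t ht.le
    have hτt : τ t ≤ M := (le_abs_self _).trans (hτM t ht.le)
    have hdrift : 2 * τ t * x t ^ 2 ≤ 2 * M * x t ^ 2 := by gcongr
    have hdamp : k * derivWithin τ (Iic 0) t * x t ≤ k * (-c₁ * x t) * x t := by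
      gcongr
      exact hτ' t ht.le
    rw [hx' t ht.le]
    linear_combination hdrift + hdamp - x t ^ 2 * hkc₁
  refine ⟨x 0 * Real.exp (k * (τ 0 - M)), by have := hxpos 0 le_rfl; positivity, fun t ht => ?_⟩
  refine le_of_mul_le_mul_right ?_ (Real.exp_pos (k * M))
  calc x 0 * Real.exp (k * (τ 0 - M)) * Real.exp (k * M) = x 0 * Real.exp (k * τ 0) := by
        rw [mul_assoc, ← Real.exp_add]; ring_nf
    _ ≤ x t * Real.exp (k * τ t) := hanti ht self_mem_Iic ht
    _ ≤ x t * Real.exp (k * M) := by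
        gcongr
        · exact (hxpos t ht).le
        · exact (le_abs_self _).trans (hτM t ht)

theorem stmt7_general (lam c₁ M : ℝ) (hc₁ : 0 < c₁)
    (x τ : ℝ → ℝ)
    (hxd : DifferentiableOn ℝ x (Set.Iic 0)) (hτd : DifferentiableOn ℝ τ (Set.Iic 0))
    (hxpos : ∀ t : ℝ, t ≤ 0 → 0 < x t)
    (hτM : ∀ t : ℝ, t ≤ 0 → |τ t| ≤ M)
    (hx' : ∀ t : ℝ, t ≤ 0 → derivWithin x (Set.Iic 0) t = 2 * τ t * (x t) ^ 2)
    (hτ' : ∀ t : ℝ, t ≤ 0 → τ t ≤ 2 * Real.sqrt lam / 3 →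
      derivWithin τ (Set.Iic 0) t ≤ -c₁ * x t)
    (hx0 : Tendsto x atBot (𝓝 0)) :
    ∃ T : ℝ, 0 < T ∧ ∀ t : ℝ, t ≤ -T → 2 * Real.sqrt lam / 3 < τ t := by
  set κ := 2 * Real.sqrt lam / 3
  suffices h : ∀ᶠ t in atBot, κ < τ t by
    obtain ⟨a, ha⟩ := eventually_atBot.1 h
    exact ⟨max 1 (-a), by positivity, fun t ht => ha t (by linarith [le_max_right 1 (-a)])⟩
  by_contra hfreq
  rw [not_eventually] at hfreq
  have hτκ : ∀ t ≤ 0, τ t ≤ κ := fun t ht => by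
    obtain ⟨s, hsκ, hst⟩ := (hfreq.and_eventually (eventually_le_atBot t)).exists
    refine le_of_derivWithin_neg_of_eq hst (fun u hu => hu.2.trans ht) hτd (fun u hu hτu => ?_)
      (not_lt.1 hsκ)
    have hu : u ≤ 0 := hu.2.le.trans ht
    exact (hτ' u hu hτu.le).trans_lt (by linarith [mul_pos hc₁ (hxpos u hu)])
  obtain ⟨δ, hδ, hδx⟩ := exists_pos_le_of_derivWithin_le_neg_mul hc₁ hxd hτd hxpos hτM hx'
    fun t ht => hτ' t ht (hτκ t ht)
  obtain ⟨t, hxt, ht⟩ :=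
    ((hx0.eventually (eventually_lt_nhds hδ)).and (eventually_le_atBot 0)).exists
  exact (hδx t ht).not_gt hxt

/-- Coordinate form of the claim in Step 2 of the proof of Lemma 3.1: along a
backward bicharacteristic with `x(t) → 0` as `t → -∞`, eventually
`τ(t) > 2√λ/3`. -/
theorem stmt7 (lam c₁ M : ℝ) (hlam : 0 < lam) (hc₁ : 0 < c₁)
    (hM : Real.sqrt lam ≤ M) (x τ : ℝ → ℝ)
    (hxd : DifferentiableOn ℝ x (Set.Iic 0)) (hτd : DifferentiableOn ℝ τ (Set.Iic 0))
    (hxpos : ∀ t : ℝ, t ≤ 0 → 0 < x t)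
    (hτM : ∀ t : ℝ, t ≤ 0 → |τ t| ≤ M)
    (hx' : ∀ t : ℝ, t ≤ 0 → derivWithin x (Set.Iic 0) t = 2 * τ t * (x t) ^ 2)
    (hτ' : ∀ t : ℝ, t ≤ 0 → τ t ≤ 2 * Real.sqrt lam / 3 →
      derivWithin τ (Set.Iic 0) t ≤ -c₁ * x t)
    (hx0 : Tendsto x atBot (𝓝 0)) :
    ∃ T : ℝ, 0 < T ∧ ∀ t : ℝ, t ≤ -T → 2 * Real.sqrt lam / 3 < τ t :=
  stmt7_general lam c₁ M hc₁ x τ hxd hτd hxpos hτM hx' hτ' hx0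
end
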